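/- Under the schedule assumptions, the Föllmer diffusion coefficient satisfies lim_{t→1⁻} g^F(t)²/σ(t) = −2σ'(1) = 2|σ'(1)|. In particular g^F extends continuously to t = 1 with g^F(1) = 0. -/
import Mathlib


open Filter Set
open scoped Topology

noncomputable section

/-- The squared Föllmer diffusion coefficient,
`g^F(t)² = |2tσ(t)(β'(t)σ(t)/β(t) − σ'(t)) − σ(t)²|`. -/
def gFsq (β σ : ℝ → ℝ) (t : ℝ) : ℝ :=
  |2 * t * σ t * (deriv β t * σ t / β t - deriv σ t) - σ t ^ 2|

/-- `g^F(t)²/σ(t) → −2σ'(1) = 2|σ'(1)|` as `t → 1⁻`; in particular `g^F`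
extends continuously to `t = 1` with `g^F(1) = 0`. -/
theorem follmer_coefficient_boundary_one (β σ : ℝ → ℝ)
    (hβC : ContDiff ℝ 1 β) (hσC : ContDiff ℝ 1 σ)
    (hβ0 : β 0 = 0) (hβ1 : β 1 = 1) (hσ0 : 0 < σ 0) (hσ1 : σ 1 = 0)
    (hβ' : ∀ t ∈ Icc (0:ℝ) 1, 0 < deriv β t)
    (hσ' : ∀ t ∈ Icc (0:ℝ) 1, deriv σ t < 0) :
    Tendsto (fun t => gFsq β σ t / σ t) (𝓝[<] 1) (𝓝 (-2 * deriv σ 1)) ∧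
    -2 * deriv σ 1 = 2 * |deriv σ 1| ∧
    Tendsto (fun t => Real.sqrt (gFsq β σ t)) (𝓝[<] 1) (𝓝 0) := by
  have hβd : Continuous (deriv β) := hβC.continuous_deriv le_rfl
  have hσd : Continuous (deriv σ) := hσC.continuous_deriv le_rfl
  have hσc : Continuous σ := hσC.continuous
  have hβc : Continuous β := hβC.continuous
  have hanti : StrictAntiOn σ (Icc 0 1) := by
    apply strictAntiOn_of_deriv_neg (convex_Icc 0 1) hσc.continuousOn
    intro x hx
    rw [interior_Icc] at hx
    exact hσ' x ⟨hx.1.le, hx.2.le⟩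
  have hσpos : ∀ t ∈ Ico (0:ℝ) 1, 0 < σ t := fun t ht => by
    have := hanti ⟨ht.1, ht.2.le⟩ (right_mem_Icc.2 zero_le_one) ht.2
    simpa [hσ1] using this
  have hσ1' : deriv σ 1 < 0 := hσ' 1 (right_mem_Icc.2 zero_le_one)
  set f : ℝ → ℝ := fun t => 2 * t * (deriv β t * σ t / β t - deriv σ t) - σ t with hf
  have hfc : ContinuousAt f 1 := by
    apply ContinuousAt.sub
    · apply ContinuousAt.mul
      · exact continuousAt_const.mul continuousAt_id
      · exact ((hβd.continuousAt.mul hσc.continuousAt).div hβc.continuousAt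
          (by simp [hβ1])).sub hσd.continuousAt
    · exact hσc.continuousAt
  have hf1 : |f 1| = -2 * deriv σ 1 := by
    have : f 1 = -2 * deriv σ 1 := by
      show 2 * 1 * (deriv β 1 * σ 1 / β 1 - deriv σ 1) - σ 1 = -2 * deriv σ 1
      rw [hβ1, hσ1]; ring
    rw [this, abs_of_pos]
    nlinarith
  have hmem : Ico (0:ℝ) 1 ∈ 𝓝[<] (1:ℝ) := by
    apply mem_nhdsWithin.2 ⟨Ioi 0, isOpen_Ioi, by norm_num, ?_⟩
    rintro x ⟨hx1, hx2⟩
    exact ⟨le_of_lt hx1, hx2⟩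
  have heq : ∀ᶠ t in 𝓝[<] (1:ℝ), gFsq β σ t / σ t = |f t| := by
    filter_upwards [hmem] with t ht
    have hσt := hσpos t ht
    have hkey : gFsq β σ t = σ t * |f t| := by
      rw [gFsq, hf]
      rw [show 2 * t * σ t * (deriv β t * σ t / β t - deriv σ t) - σ t ^ 2
            = σ t * (2 * t * (deriv β t * σ t / β t - deriv σ t) - σ t) by ring]
      rw [abs_mul, abs_of_pos hσt]
    rw [hkey]
    field_simp
  have h1 : Tendsto (fun t => gFsq β σ t / σ t) (𝓝[<] 1) (𝓝 (-2 * deriv σ 1)) := by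
    have habs : Tendsto (fun t => |f t|) (𝓝[<] 1) (𝓝 (-2 * deriv σ 1)) := by
      rw [← hf1]
      exact (hfc.abs.tendsto).mono_left nhdsWithin_le_nhds
    exact habs.congr' (heq.mono fun t h => h.symm)
  refine ⟨h1, by rw [abs_of_neg hσ1']; ring, ?_⟩
  have h2 : Tendsto (fun t => gFsq β σ t) (𝓝[<] 1) (𝓝 0) := by
    have hprod : Tendsto (fun t => gFsq β σ t / σ t * σ t) (𝓝[<] 1) (𝓝 (-2 * deriv σ 1 * 0)) := by
      apply h1.mul
      have : Tendsto σ (𝓝[<] (1:ℝ)) (𝓝 (σ 1)) := hσc.continuousAt.tendsto.mono_left nhdsWithin_le_nhds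
      simpa [hσ1] using this
    rw [mul_zero] at hprod
    apply hprod.congr'
    filter_upwards [hmem] with t ht
    exact div_mul_cancel₀ _ (hσpos t ht).ne'
  simpa using h2.sqrt
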